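/- arXiv:2308.15184 — 2 statements merged into one kernel-verified Lean document; each statement's English description precedes it below -/
import Mathlib

section
/- Positional strategies suffice for reachability games on finite arenas: let M be a DFA over the alphabet A × B with finite state type Q. If there exists an agent strategy σag such that for every environment strategy σenv there is k ≥ 1 with M.eval(play(σag, σenv)_{<k}) ∈ M.accept, then there exists a function f : Q → A such that the induced positional strategy Strategy(M, f) has the same property: for every σenv there is k ≥ 1 with M.eval(play(Strategy(M, f), σenv)_{<k}) ∈ M.accept. -/
/-! The agent wins from every state of the attractor of `M.accept`: from level `n + 1` it has a
move sending every answer into `M.accept` or into level `n`, and this move depends only on the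
current state. Conversely, from a state outside the attractor each agent move has an answer,
since `B` is finite, that avoids both `M.accept` and the attractor; so were `M.start` outside it,
the environment could defeat every agent strategy. -/

/-- The first `k` letters of an infinite trace. -/
def pre {α : Type} (π : ℕ → α) (k : ℕ) : List α := (List.range k).map π

/-- The finite history of pairs of moves after `k` rounds. -/
def playPrefix {A B : Type} (σag : List B → A) (σenv : List A → B) : ℕ → List (A × B)
  | 0 => []
  | k + 1 =>
      let h := playPrefix σag σenv k
      let a := σag (h.map Prod.snd)
      let b := σenv (h.map Prod.fst ++ [a])
      h ++ [(a, b)]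

/-- The infinite play generated by an agent strategy `σag : List B → A`
(the agent moves first) and an environment strategy `σenv : List A → B`:
`a₀ = σag []`, `b₀ = σenv [a₀]`, `a_{i+1} = σag [b₀, …, b_i]`,
`b_{i+1} = σenv [a₀, …, a_{i+1}]`, and `play σag σenv i = (a_i, b_i)`. -/
def play {A B : Type} (σag : List B → A) (σenv : List A → B) (i : ℕ) : A × B :=
  let h := playPrefix σag σenv i
  let a := σag (h.map Prod.snd)
  let b := σenv (h.map Prod.fst ++ [a])
  (a, b)

/-- Reachability property: some nonempty finite prefix is in `T`. -/
def Reach {A B : Type} (T : Set (List (A × B))) : Set (ℕ → A × B) :=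
  {π | ∃ k, 1 ≤ k ∧ pre π k ∈ T}

/-- Safety property: every nonempty finite prefix is in `T`. -/
def Safe {A B : Type} (T : Set (List (A × B))) : Set (ℕ → A × B) :=
  {π | ∀ k, 1 ≤ k → pre π k ∈ T}

/-- The agent strategy `σag` enforces the property `P`. -/
def AgentEnforces {A B : Type} (σag : List B → A) (P : Set (ℕ → A × B)) : Prop :=
  ∀ σenv : List A → B, play σag σenv ∈ P

/-- The environment strategy `σenv` enforces the property `P`. -/
def EnvEnforces {A B : Type} (σenv : List A → B) (P : Set (ℕ → A × B)) : Prop :=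
  ∀ σag : List B → A, play σag σenv ∈ P

/-- The agent strategy `σag` enforces `Task` under the environment
specification `Env`. -/
def EnforcesUnder {A B : Type} (σag : List B → A) (Task Env : Set (ℕ → A × B)) : Prop :=
  ∀ σenv : List A → B, EnvEnforces σenv Env → play σag σenv ∈ Task

/-- The positional agent strategy induced by a DFA `M` over `A × B` and an
output function `f : Q → A`: on an environment-move history `x₀ … x_{k−1}` it
traverses `q₀ = M.start`, `q_{i+1} = M.step q_i (f q_i, x_i)` and outputs
`f q_k`. -/
def posStrategy {A B Q : Type} (M : DFA (A × B) Q) (f : Q → A) (h : List B) : A :=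
  f (h.foldl (fun q x => M.step q (f q, x)) M.start)

section Positional

open Classical

variable {A B Q : Type}

lemma pre_succ {α : Type} (π : ℕ → α) (k : ℕ) : pre π (k + 1) = pre π k ++ [π k] := by
  simp [pre, List.range_succ]

lemma playPrefix_eq_pre (σag : List B → A) (σenv : List A → B) (k : ℕ) :
    playPrefix σag σenv k = pre (play σag σenv) k := by
  induction k with
  | zero => rfl
  | succ k ih => rw [pre_succ, ← ih]; rfl

lemma play_fst (σag : List B → A) (σenv : List A → B) (k : ℕ) :
    (play σag σenv k).1 = σag ((pre (play σag σenv) k).map Prod.snd) := by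
  rw [← playPrefix_eq_pre]; rfl

lemma play_snd (σag : List B → A) (σenv : List A → B) (k : ℕ) :
    (play σag σenv k).2 =
      σenv ((pre (play σag σenv) k).map Prod.fst ++ [(play σag σenv k).1]) := by
  rw [← playPrefix_eq_pre]; rfl

lemma DFA.eval_pre_succ (M : DFA (A × B) Q) (π : ℕ → A × B) (k : ℕ) :
    M.eval (pre π (k + 1)) = M.step (M.eval (pre π k)) (π k) := by
  rw [pre_succ, DFA.eval_append_singleton]

lemma play_posStrategy_fst (M : DFA (A × B) Q) (f : Q → A) (σenv : List A → B) (k : ℕ) :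
    (play (posStrategy M f) σenv k).1 = f (M.eval (pre (play (posStrategy M f) σenv) k)) := by
  set π := play (posStrategy M f) σenv
  suffices hrun : ∀ k, ((pre π k).map Prod.snd).foldl (fun q x => M.step q (f q, x)) M.start =
      M.eval (pre π k) by
    rw [play_fst, posStrategy, hrun]
  intro k
  induction k with
  | zero => rfl
  | succ k ih =>
    have hmove : (π k).1 = f (M.eval (pre π k)) := by rw [play_fst, posStrategy, ih]
    rw [pre_succ, List.map_append, List.foldl_append, ih, DFA.eval_append_singleton]
    simp only [List.map_cons, List.map_nil, List.foldl_cons, List.foldl_nil]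
    rw [← hmove]

/-- `a₀` is only a default for the empty history, which never occurs in a play. -/
def envStrategy (M : DFA (A × B) Q) (g : Q → A → B) (a₀ : A) (as : List A) : B :=
  g (as.dropLast.foldl (fun q a => M.step q (a, g q a)) M.start) (as.getLastD a₀)

lemma play_envStrategy_snd (M : DFA (A × B) Q) (g : Q → A → B) (a₀ : A)
    (σag : List B → A) (k : ℕ) :
    (play σag (envStrategy M g a₀) k).2 =
      g (M.eval (pre (play σag (envStrategy M g a₀)) k)) (play σag (envStrategy M g a₀) k).1 := by
  set π := play σag (envStrategy M g a₀)
  suffices hrun : ∀ k, ((pre π k).map Prod.fst).foldl (fun q a => M.step q (a, g q a)) M.start =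
      M.eval (pre π k) by
    rw [play_snd, envStrategy, List.dropLast_concat, List.getLastD_concat, hrun]
  intro k
  induction k with
  | zero => rfl
  | succ k ih =>
    have hmove : (π k).2 = g (M.eval (pre π k)) (π k).1 := by
      rw [play_snd, envStrategy, List.dropLast_concat, List.getLastD_concat, ih]
    rw [pre_succ, List.map_append, List.foldl_append, ih, DFA.eval_append_singleton]
    simp only [List.map_cons, List.map_nil, List.foldl_cons, List.foldl_nil]
    rw [← hmove]

def attractor (M : DFA (A × B) Q) : ℕ → Set Q
  | 0 => ∅
  | n + 1 => {q | ∃ a, ∀ b, M.step q (a, b) ∈ M.accept ∪ attractor M n}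

def winningRegion (M : DFA (A × B) Q) : Set Q := ⋃ n, attractor M n

lemma attractor_mono (M : DFA (A × B) Q) : Monotone (attractor M) := by
  refine monotone_nat_of_le_succ fun n => ?_
  induction n with
  | zero => simp [attractor]
  | succ n ih =>
    rintro q ⟨a, ha⟩
    exact ⟨a, fun b => Set.union_subset_union_right _ ih (ha b)⟩

/-- Chosen at the least level containing `q`, so that it serves every level containing `q`. -/
noncomputable def attractorMove (M : DFA (A × B) Q) [Nonempty A] (q : Q) : A :=
  if h : ∃ n, q ∈ attractor M (n + 1) then (Nat.find_spec h).choose else Classical.arbitrary A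

lemma step_attractorMove_mem (M : DFA (A × B) Q) [Nonempty A] {n : ℕ} {q : Q}
    (hq : q ∈ attractor M (n + 1)) (b : B) :
    M.step q (attractorMove M q, b) ∈ M.accept ∪ attractor M n := by
  have h : ∃ n, q ∈ attractor M (n + 1) := ⟨n, hq⟩
  rw [attractorMove, dif_pos h]
  exact Set.union_subset_union_right _ (attractor_mono M (Nat.find_min' h hq))
    ((Nat.find_spec h).choose_spec b)

lemma exists_accept_of_attractorMove (M : DFA (A × B) Q) [Nonempty A] {π : ℕ → A × B}
    (hπ : ∀ k, (π k).1 = attractorMove M (M.eval (pre π k))) (n : ℕ) :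
    ∀ k, M.eval (pre π k) ∈ attractor M n → ∃ j, k < j ∧ M.eval (pre π j) ∈ M.accept := by
  induction n with
  | zero => simp [attractor]
  | succ n ih =>
    intro k hk
    have hnext := step_attractorMove_mem M hk (π k).2
    rw [← hπ, ← DFA.eval_pre_succ] at hnext
    rcases hnext with hacc | hattr
    · exact ⟨k + 1, k.lt_succ_self, hacc⟩
    · obtain ⟨j, hkj, hj⟩ := ih (k + 1) hattr
      exact ⟨j, by omega, hj⟩

/-- Finiteness of `B` is what bounds the levels of the successors of `q` uniformly. -/
lemma exists_step_not_mem_winningRegion (M : DFA (A × B) Q) [Fintype B] {q : Q}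
    (hq : q ∉ winningRegion M) (a : A) :
    ∃ b, M.step q (a, b) ∉ M.accept ∪ winningRegion M := by
  by_contra! hall
  have hlevel : ∀ b, ∃ n, M.step q (a, b) ∈ M.accept ∪ attractor M n := fun b => by
    rcases hall b with hacc | hwin
    · exact ⟨0, Or.inl hacc⟩
    · obtain ⟨n, hn⟩ := Set.mem_iUnion.1 hwin
      exact ⟨n, Or.inr hn⟩
  choose level hlevel using hlevel
  refine hq (Set.mem_iUnion.2 ⟨Finset.univ.sup level + 1, a, fun b => ?_⟩)
  exact Set.union_subset_union_right _
    (attractor_mono M (Finset.le_sup (Finset.mem_univ b))) (hlevel b)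

noncomputable def escapeMove (M : DFA (A × B) Q) [Nonempty B] (q : Q) (a : A) : B :=
  if h : ∃ b, M.step q (a, b) ∉ M.accept ∪ winningRegion M then h.choose
  else Classical.arbitrary B

lemma step_escapeMove_not_mem (M : DFA (A × B) Q) [Fintype B] [Nonempty B] {q : Q}
    (hq : q ∉ winningRegion M) (a : A) :
    M.step q (a, escapeMove M q a) ∉ M.accept ∪ winningRegion M := by
  have h := exists_step_not_mem_winningRegion M hq a
  rw [escapeMove, dif_pos h]
  exact h.choose_spec

lemma eval_pre_succ_not_mem_of_escapeMove (M : DFA (A × B) Q) [Fintype B] [Nonempty B]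
    {π : ℕ → A × B}
    (hπ : ∀ k, (π k).2 = escapeMove M (M.eval (pre π k)) (π k).1)
    (hstart : M.start ∉ winningRegion M) (k : ℕ) :
    M.eval (pre π (k + 1)) ∉ M.accept ∪ winningRegion M := by
  have hstep : ∀ k, M.eval (pre π k) ∉ winningRegion M →
      M.eval (pre π (k + 1)) ∉ M.accept ∪ winningRegion M := fun k hk => by
    rw [DFA.eval_pre_succ, show π k = ((π k).1, (π k).2) from rfl, hπ]
    exact step_escapeMove_not_mem M hk _
  have hstay : ∀ k, M.eval (pre π k) ∉ winningRegion M := fun k => by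
    induction k with
    | zero => exact hstart
    | succ k ih => exact fun hwin => hstep k ih (Or.inr hwin)
  exact hstep k (hstay k)

lemma start_mem_winningRegion (M : DFA (A × B) Q) [Fintype B]
    (h : ∃ σag : List B → A, ∀ σenv : List A → B,
      ∃ k, 1 ≤ k ∧ M.eval (pre (play σag σenv) k) ∈ M.accept) :
    M.start ∈ winningRegion M := by
  by_contra hstart
  obtain ⟨σag, hσag⟩ := h
  have : Nonempty B := (exists_step_not_mem_winningRegion M hstart (σag [])).nonempty
  obtain ⟨k, hk, hacc⟩ := hσag (envStrategy M (escapeMove M) (σag []))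
  obtain ⟨k, rfl⟩ := Nat.exists_eq_add_of_le' hk
  exact eval_pre_succ_not_mem_of_escapeMove M (play_envStrategy_snd M _ _ σag) hstart k
    (Or.inl hacc)

end Positional

theorem positional_suffices_reach_general {A B Q : Type}
    [Fintype B]
    (M : DFA (A × B) Q)
    (h : ∃ σag : List B → A, ∀ σenv : List A → B,
      ∃ k, 1 ≤ k ∧ M.eval (pre (play σag σenv) k) ∈ M.accept) :
    ∃ f : Q → A, ∀ σenv : List A → B,
      ∃ k, 1 ≤ k ∧ M.eval (pre (play (posStrategy M f) σenv) k) ∈ M.accept := by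
  have : Nonempty A := h.elim fun σag _ => ⟨σag []⟩
  obtain ⟨n, hn⟩ := Set.mem_iUnion.1 (start_mem_winningRegion M h)
  exact ⟨attractorMove M, fun σenv =>
    exists_accept_of_attractorMove M (play_posStrategy_fst M _ σenv) n 0 hn⟩

/-- Positional strategies suffice for reachability games on finite arenas: if
some agent strategy guarantees that against every environment strategy the run
of the play in `M` visits `M.accept` at some time `k ≥ 1`, then some positional
strategy induced by a function `f : Q → A` does so as well. -/
theorem positional_suffices_reach {A B Q : Type}
    [Fintype A] [Fintype B] [Nonempty A] [Nonempty B] [Fintype Q]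
    (M : DFA (A × B) Q)
    (h : ∃ σag : List B → A, ∀ σenv : List A → B,
      ∃ k, 1 ≤ k ∧ M.eval (pre (play σag σenv) k) ∈ M.accept) :
    ∃ f : Q → A, ∀ σenv : List A → B,
      ∃ k, 1 ≤ k ∧ M.eval (pre (play (posStrategy M f) σenv) k) ∈ M.accept :=
  positional_suffices_reach_general M h
end

section
/- Positional strategies suffice for safety games on finite arenas: let M be a DFA over the alphabet A × B with finite state type Q. If there exists an agent strategy σag such that for every environment strategy σenv and every k ≥ 1, M.eval(play(σag, σenv)_{<k}) ∈ M.accept, then there exists a function f : Q → A such that the induced positional strategy Strategy(M, f) has the same property: for every σenv and every k ≥ 1, M.eval(play(Strategy(M, f), σenv)_{<k}) ∈ M.accept. -/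
variable {A B Q : Type}

theorem playPrefix_succ (σag : List B → A) (σenv : List A → B) (k : ℕ) :
    playPrefix σag σenv (k + 1) = playPrefix σag σenv k ++ [play σag σenv k] :=
  rfl

theorem length_playPrefix (σag : List B → A) (σenv : List A → B) (k : ℕ) :
    (playPrefix σag σenv k).length = k := by
  induction k with
  | zero => rfl
  | succ k ih => simp [playPrefix_succ, ih]

theorem pre_play (σag : List B → A) (σenv : List A → B) (k : ℕ) :
    pre (play σag σenv) k = playPrefix σag σenv k := by
  induction k with
  | zero => rfl
  | succ k ih => rw [playPrefix_succ, ← ih, pre, pre, List.range_succ, List.map_append]; rfl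

theorem playPrefix_congr_env (σag : List B → A) {σenv₁ σenv₂ : List A → B} {k : ℕ}
    (h : ∀ l : List A, l.length ≤ k → σenv₁ l = σenv₂ l) :
    playPrefix σag σenv₁ k = playPrefix σag σenv₂ k := by
  induction k with
  | zero => rfl
  | succ k ih =>
    have hk : playPrefix σag σenv₁ k = playPrefix σag σenv₂ k :=
      ih fun l hl => h l (by omega)
    simp only [playPrefix_succ, play, hk]
    rw [h _ (by simp [length_playPrefix])]

theorem exists_env_playPrefix_succ (σag : List B → A) (σenv : List A → B) (k : ℕ) (b : B) :
    ∃ σenv' : List A → B, playPrefix σag σenv' (k + 1) =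
      playPrefix σag σenv k ++ [(σag ((playPrefix σag σenv k).map Prod.snd), b)] := by
  let σenv' : List A → B := fun l => if l.length = k + 1 then b else σenv l
  have hprefix : playPrefix σag σenv' k = playPrefix σag σenv k :=
    playPrefix_congr_env σag fun l hl => if_neg (by omega)
  refine ⟨σenv', ?_⟩
  simp only [playPrefix_succ, play, hprefix, σenv', List.length_append, List.length_map,
    length_playPrefix, List.length_singleton, if_true]

namespace DFA

variable (M : DFA (A × B) Q)

def safePre (S : Set Q) : Set Q :=
  {q | ∃ a : A, ∀ b : B, M.step q (a, b) ∈ M.accept ∩ S}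

def reachedBy (σag : List B → A) : Set Q :=
  {q | ∃ (σenv : List A → B) (k : ℕ), M.eval (playPrefix σag σenv k) = q}

theorem start_mem_reachedBy [Nonempty B] (σag : List B → A) : M.start ∈ M.reachedBy σag :=
  ⟨fun _ => Classical.arbitrary B, 0, rfl⟩

theorem reachedBy_subset_safePre {σag : List B → A}
    (hσ : ∀ (σenv : List A → B) (k : ℕ), 1 ≤ k → M.eval (playPrefix σag σenv k) ∈ M.accept) :
    M.reachedBy σag ⊆ M.safePre (M.reachedBy σag) := by
  rintro _ ⟨σenv, k, rfl⟩
  refine ⟨σag ((playPrefix σag σenv k).map Prod.snd), fun b => ?_⟩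
  obtain ⟨σenv', hσenv'⟩ := exists_env_playPrefix_succ σag σenv k b
  rw [← eval_append_singleton, ← hσenv']
  exact ⟨hσ σenv' (k + 1) (by omega), σenv', k + 1, rfl⟩

theorem foldl_posStrategy_playPrefix (f : Q → A) (σenv : List A → B) (k : ℕ) :
    ((playPrefix (posStrategy M f) σenv k).map Prod.snd).foldl
      (fun q x => M.step q (f q, x)) M.start = M.eval (playPrefix (posStrategy M f) σenv k) := by
  induction k with
  | zero => rfl
  | succ k ih =>
    have hmove : (play (posStrategy M f) σenv k).1 =
        f (M.eval (playPrefix (posStrategy M f) σenv k)) := by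
      rw [← ih]; rfl
    rw [playPrefix_succ, List.map_append, List.foldl_append, ih, eval_append_singleton]
    simp only [List.map_cons, List.map_nil, List.foldl_cons, List.foldl_nil, ← hmove, Prod.mk.eta]

theorem eval_playPrefix_posStrategy_succ (f : Q → A) (σenv : List A → B) (k : ℕ) :
    M.eval (playPrefix (posStrategy M f) σenv (k + 1)) =
      M.step (M.eval (playPrefix (posStrategy M f) σenv k))
        (f (M.eval (playPrefix (posStrategy M f) σenv k)), (play (posStrategy M f) σenv k).2) := by
  rw [playPrefix_succ, eval_append_singleton, ← foldl_posStrategy_playPrefix]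
  rfl

theorem exists_posStrategy_safe_of_subset_safePre {S : Set Q} (hS : S ⊆ M.safePre S)
    (hstart : M.start ∈ S) :
    ∃ f : Q → A, ∀ (σenv : List A → B) (k : ℕ), 1 ≤ k →
      M.eval (playPrefix (posStrategy M f) σenv k) ∈ M.accept := by
  have : Nonempty A := ⟨(hS hstart).choose⟩
  have hS' : ∀ q ∈ S, ∃ a : A, ∀ b : B, M.step q (a, b) ∈ M.accept ∩ S := hS
  choose! f hf using hS'
  refine ⟨f, fun σenv => ?_⟩
  have hsucc : ∀ k, M.eval (playPrefix (posStrategy M f) σenv k) ∈ S →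
      M.eval (playPrefix (posStrategy M f) σenv (k + 1)) ∈ M.accept ∩ S := fun k hk => by
    rw [eval_playPrefix_posStrategy_succ]
    exact hf _ hk _
  have hmem : ∀ k, M.eval (playPrefix (posStrategy M f) σenv k) ∈ S :=
    fun k => Nat.rec hstart (fun k hk => (hsucc k hk).2) k
  rintro (_ | k) hk
  · omega
  · exact (hsucc k (hmem k)).1

end DFA

theorem positional_suffices_safe_general {A B Q : Type}
    [Nonempty B]
    (M : DFA (A × B) Q)
    (h : ∃ σag : List B → A, ∀ σenv : List A → B,
      ∀ k, 1 ≤ k → M.eval (pre (play σag σenv) k) ∈ M.accept) :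
    ∃ f : Q → A, ∀ σenv : List A → B,
      ∀ k, 1 ≤ k → M.eval (pre (play (posStrategy M f) σenv) k) ∈ M.accept := by
  obtain ⟨σag, hσ⟩ := h
  simp only [pre_play] at hσ ⊢
  exact M.exists_posStrategy_safe_of_subset_safePre (M.reachedBy_subset_safePre hσ)
    (M.start_mem_reachedBy σag)

/-- Positional strategies suffice for safety games on finite arenas: if some
agent strategy guarantees that against every environment strategy the run of
the play in `M` stays in `M.accept` at every time `k ≥ 1`, then some positional
strategy induced by a function `f : Q → A` does so as well. -/
theorem positional_suffices_safe {A B Q : Type}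
    [Fintype A] [Fintype B] [Nonempty A] [Nonempty B] [Fintype Q]
    (M : DFA (A × B) Q)
    (h : ∃ σag : List B → A, ∀ σenv : List A → B,
      ∀ k, 1 ≤ k → M.eval (pre (play σag σenv) k) ∈ M.accept) :
    ∃ f : Q → A, ∀ σenv : List A → B,
      ∀ k, 1 ≤ k → M.eval (pre (play (posStrategy M f) σenv) k) ∈ M.accept :=
  positional_suffices_safe_general M h
end
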